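/- arXiv:1903.10655 — 5 statements merged into one kernel-verified Lean document; each statement's English description precedes it below -/
import Mathlib

section
/- Let Λ, Λ' be lattices in ℝⁿ with bases {ω₁,…,ωₙ} and {ζ₁,…,ζₙ} respectively, g : ℝⁿ → ℝⁿ a K-Lipschitz map with g(0) = 0 and g(x + Σ mᵢωᵢ) = g(x) + Σ mᵢζᵢ for all x ∈ ℝⁿ and integers mᵢ, and w : ℝⁿ → ℝⁿ the linear map sending ωᵢ to ζᵢ. Then the functions g_k(x) := g(kx)/k converge uniformly on ℝⁿ to w as k → ∞. -/
/-!
Since `w` is linear and maps each `ωᵢ` to `ζᵢ`, the difference `g - w` is invariant under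
translation by the lattice `Λ`. Being Lipschitz, it is therefore bounded on `ℝⁿ` by its bound
on a fundamental parallelepiped, so `‖g (k x) / k - w x‖ = ‖(g - w) (k x)‖ / k ≤ C / k`.
-/

open Filter

variable {ι E F : Type*} [Fintype ι] [NormedAddCommGroup E] [NormedSpace ℝ E]
  [NormedAddCommGroup F]

theorem Module.Basis.exists_norm_add_sum_intCast_smul_le (B : Module.Basis ι ℝ E) (x : E) :
    ∃ m : ι → ℤ, ‖x + ∑ i, (m i : ℝ) • B i‖ ≤ ∑ i, ‖B i‖ := by
  refine ⟨fun i => -⌊B.repr x i⌋, ?_⟩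
  convert ZSpan.norm_fract_le B x using 2
  simp [ZSpan.fract_apply, ZSpan.floor, sub_eq_add_neg, Int.cast_smul_eq_zsmul]

theorem LipschitzWith.norm_le_of_periodic {K : NNReal} {h : E → F} (hh : LipschitzWith K h)
    (B : Module.Basis ι ℝ E) (hper : ∀ x (m : ι → ℤ), h (x + ∑ i, (m i : ℝ) • B i) = h x)
    (x : E) : ‖h x‖ ≤ ‖h 0‖ + K * ∑ i, ‖B i‖ := by
  obtain ⟨m, hm⟩ := B.exists_norm_add_sum_intCast_smul_le x
  set y := x + ∑ i, (m i : ℝ) • B i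
  calc ‖h x‖ = ‖h 0 + (h y - h 0)‖ := by rw [hper, add_sub_cancel]
    _ ≤ ‖h 0‖ + K * ‖y - 0‖ := norm_add_le_of_le le_rfl (hh.norm_sub_le y 0)
    _ ≤ ‖h 0‖ + K * ∑ i, ‖B i‖ := by rw [sub_zero]; gcongr

theorem tendstoUniformly_inv_smul_comp_smul_of_norm_sub_le [NormedSpace ℝ F] {g : E → F}
    (w : E →ₗ[ℝ] F) {C : ℝ} (hC : ∀ x, ‖g x - w x‖ ≤ C) :
    TendstoUniformly (fun (k : ℕ) x => (k : ℝ)⁻¹ • g ((k : ℝ) • x)) w atTop := by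
  rw [Metric.tendstoUniformly_iff]
  intro ε hε
  filter_upwards [(tendsto_const_div_atTop_nhds_zero_nat C).eventually (gt_mem_nhds hε),
    eventually_ne_atTop 0] with k hk hk_ne x
  have hk0 : (k : ℝ) ≠ 0 := Nat.cast_ne_zero.mpr hk_ne
  have hw : w x = (k : ℝ)⁻¹ • w ((k : ℝ) • x) := by rw [map_smul, inv_smul_smul₀ hk0]
  calc dist (w x) ((k : ℝ)⁻¹ • g ((k : ℝ) • x))
      = (k : ℝ)⁻¹ * ‖g ((k : ℝ) • x) - w ((k : ℝ) • x)‖ := by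
        rw [dist_eq_norm', hw, ← smul_sub, norm_smul, norm_inv, RCLike.norm_natCast]
    _ ≤ (k : ℝ)⁻¹ * C := by gcongr; exact hC _
    _ < ε := by rwa [inv_mul_eq_div]

theorem tendstoUniformly_rescale_to_affine_general (n : ℕ) (K : NNReal)
    (B B' : Module.Basis (Fin n) ℝ (EuclideanSpace ℝ (Fin n)))
    (g : EuclideanSpace ℝ (Fin n) → EuclideanSpace ℝ (Fin n))
    (hg : LipschitzWith K g)
    (hequiv : ∀ (x : EuclideanSpace ℝ (Fin n)) (m : Fin n → ℤ),
      g (x + ∑ i, (m i : ℝ) • B i) = g x + ∑ i, (m i : ℝ) • B' i)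
    (w : EuclideanSpace ℝ (Fin n) →ₗ[ℝ] EuclideanSpace ℝ (Fin n))
    (hw : ∀ i, w (B i) = B' i) :
    TendstoUniformly (fun (k : ℕ) (x : EuclideanSpace ℝ (Fin n)) => ((k : ℝ))⁻¹ • g ((k : ℝ) • x))
      (fun x => w x) Filter.atTop := by
  have hlip : LipschitzWith (K + _) fun x => g x - w x :=
    hg.sub (LinearMap.toContinuousLinearMap w).lipschitz
  have hper : ∀ x (m : Fin n → ℤ),
      g (x + ∑ i, (m i : ℝ) • B i) - w (x + ∑ i, (m i : ℝ) • B i) = g x - w x := by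
    intro x m
    simp only [hequiv, map_add, map_sum, map_smul, hw]
    abel
  exact tendstoUniformly_inv_smul_comp_smul_of_norm_sub_le w (hlip.norm_le_of_periodic B hper)

/-- Let `Λ, Λ'` be lattices in `ℝⁿ` with bases `ω = B` and `ζ = B'`, let `g` be a
`K`-Lipschitz map with `g 0 = 0` satisfying the lattice equivariance
`g (x + Σ mᵢ ωᵢ) = g x + Σ mᵢ ζᵢ`, and let `w` be the linear map with `w ωᵢ = ζᵢ`.
Then the maps `g_k (x) = g (k x) / k` converge uniformly on `ℝⁿ` to `w`. -/
theorem tendstoUniformly_rescale_to_affine (n : ℕ) (K : NNReal)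
    (B B' : Module.Basis (Fin n) ℝ (EuclideanSpace ℝ (Fin n)))
    (g : EuclideanSpace ℝ (Fin n) → EuclideanSpace ℝ (Fin n))
    (hg : LipschitzWith K g) (hg0 : g 0 = 0)
    (hequiv : ∀ (x : EuclideanSpace ℝ (Fin n)) (m : Fin n → ℤ),
      g (x + ∑ i, (m i : ℝ) • B i) = g x + ∑ i, (m i : ℝ) • B' i)
    (w : EuclideanSpace ℝ (Fin n) →ₗ[ℝ] EuclideanSpace ℝ (Fin n))
    (hw : ∀ i, w (B i) = B' i) :
    TendstoUniformly (fun (k : ℕ) (x : EuclideanSpace ℝ (Fin n)) => ((k : ℝ))⁻¹ • g ((k : ℝ) • x))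
      (fun x => w x) Filter.atTop :=
  tendstoUniformly_rescale_to_affine_general n K B B' g hg hequiv w hw
end

section
/- Let Λ, Λ' be full-rank lattices in ℝⁿ with bases {ω₁,…,ωₙ} and {ζ₁,…,ζₙ}, and let w be the linear map with w(ωᵢ) = ζᵢ. If g : ℝⁿ → ℝⁿ is any K-Lipschitz map satisfying g(0) = 0 and g(x + Σ mᵢωᵢ) = g(x) + Σ mᵢζᵢ for all x ∈ ℝⁿ, mᵢ ∈ ℤ, then the Lipschitz constant of w is at most K. In other words, the linear (affine) map achieves the minimal Lipschitz constant among all maps in this equivariance class. -/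
/-!
On the lattice points `λ = Σ mᵢ ωᵢ` equivariance gives `w λ = g λ - g 0`, so `‖w λ‖ ≤ K ‖λ‖`.
Every `v` lies within `Σ ‖ωᵢ‖` of a lattice point, hence `‖w v‖ ≤ K ‖v‖ + D` for a constant `D`;
applying this to `N • v` and letting `N → ∞` removes `D`, since `w` is linear.
-/

open Module Submodule Set

section
variable {E F : Type*} [NormedAddCommGroup E] [NormedSpace ℝ E]
  [NormedAddCommGroup F] [NormedSpace ℝ F]

theorem LinearMap.norm_le_mul_of_norm_le_mul_add (f : E →ₗ[ℝ] F) {K D : ℝ}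
    (h : ∀ v, ‖f v‖ ≤ K * ‖v‖ + D) (v : E) : ‖f v‖ ≤ K * ‖v‖ := by
  by_contra! hlt
  obtain ⟨N, hN⟩ := exists_nat_gt (D / (‖f v‖ - K * ‖v‖))
  have hD : D < N * (‖f v‖ - K * ‖v‖) := (div_lt_iff₀ (sub_pos.2 hlt)).1 hN
  have hNv := h ((N : ℝ) • v)
  rw [map_smul, norm_smul, norm_smul, Real.norm_natCast] at hNv
  linarith

theorem LinearMap.norm_le_mul_of_norm_le_mul_on_span_int {ι : Type*} [Fintype ι]
    (b : Basis ι ℝ E) (f : E →ₗ[ℝ] F) {K : ℝ} (hK : 0 ≤ K)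
    (hf : ∀ v ∈ span ℤ (Set.range b), ‖f v‖ ≤ K * ‖v‖) (v : E) : ‖f v‖ ≤ K * ‖v‖ := by
  have : FiniteDimensional ℝ E := Module.Finite.of_basis b
  set C := ∑ i, ‖b i‖
  set f' := LinearMap.toContinuousLinearMap f
  refine f.norm_le_mul_of_norm_le_mul_add (D := K * C + ‖f'‖ * C) (fun v => ?_) v
  have hfract := ZSpan.norm_fract_le b v
  have hfloor : ‖(ZSpan.floor b v : E)‖ ≤ ‖v‖ + C := by
    rw [← sub_sub_cancel v (ZSpan.floor b v : E), ← ZSpan.fract_apply]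
    exact (norm_sub_le _ _).trans (by gcongr)
  calc ‖f v‖ = ‖f (ZSpan.floor b v) + f (ZSpan.fract b v)‖ := by
        rw [← map_add, ZSpan.fract_apply, add_sub_cancel]
    _ ≤ K * ‖(ZSpan.floor b v : E)‖ + ‖f'‖ * ‖ZSpan.fract b v‖ :=
        (norm_add_le _ _).trans (add_le_add (hf _ (ZSpan.floor b v).2) (f'.le_opNorm _))
    _ ≤ K * (‖v‖ + C) + ‖f'‖ * C := by gcongr
    _ = K * ‖v‖ + (K * C + ‖f'‖ * C) := by ring

end

theorem affine_map_is_lipschitz_extremal_general (n : ℕ) (K : NNReal)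
    (B B' : Module.Basis (Fin n) ℝ (EuclideanSpace ℝ (Fin n)))
    (w : EuclideanSpace ℝ (Fin n) →ₗ[ℝ] EuclideanSpace ℝ (Fin n))
    (hw : ∀ i, w (B i) = B' i)
    (g : EuclideanSpace ℝ (Fin n) → EuclideanSpace ℝ (Fin n))
    (hg : LipschitzWith K g)
    (hequiv : ∀ (x : EuclideanSpace ℝ (Fin n)) (m : Fin n → ℤ),
      g (x + ∑ i, (m i : ℝ) • B i) = g x + ∑ i, (m i : ℝ) • B' i) :
    LipschitzWith K (fun x => w x) := by
  have hlattice : ∀ v ∈ span ℤ (range B), ‖w v‖ ≤ K * ‖v‖ := by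
    intro v hv
    obtain ⟨m, rfl⟩ := (mem_span_range_iff_exists_fun ℤ).1 hv
    simp only [← Int.cast_smul_eq_zsmul ℝ]
    have hw_eq : w (∑ i, (m i : ℝ) • B i) = g (∑ i, (m i : ℝ) • B i) - g 0 := by
      rw [← zero_add (∑ i, (m i : ℝ) • B i), hequiv 0 m, add_sub_cancel_left, zero_add]
      simp only [map_sum, map_smul, hw]
    simpa [hw_eq, ← dist_eq_norm] using hg.dist_le_mul (∑ i, (m i : ℝ) • B i) 0
  simpa using AddMonoidHomClass.lipschitz_of_bound w K
    (w.norm_le_mul_of_norm_le_mul_on_span_int B K.2 hlattice)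

/-- Let `Λ, Λ'` be full-rank lattices in `ℝⁿ` with bases `ω = B`, `ζ = B'`, and `w` the
linear map with `w ωᵢ = ζᵢ`.  If `g` is any `K`-Lipschitz map with `g 0 = 0` satisfying
the equivariance `g (x + Σ mᵢ ωᵢ) = g x + Σ mᵢ ζᵢ`, then the Lipschitz constant of `w`
is at most `K`: the affine map achieves the minimal Lipschitz constant in the class. -/
theorem affine_map_is_lipschitz_extremal (n : ℕ) (K : NNReal)
    (B B' : Module.Basis (Fin n) ℝ (EuclideanSpace ℝ (Fin n)))
    (w : EuclideanSpace ℝ (Fin n) →ₗ[ℝ] EuclideanSpace ℝ (Fin n))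
    (hw : ∀ i, w (B i) = B' i)
    (g : EuclideanSpace ℝ (Fin n) → EuclideanSpace ℝ (Fin n))
    (hg : LipschitzWith K g) (hg0 : g 0 = 0)
    (hequiv : ∀ (x : EuclideanSpace ℝ (Fin n)) (m : Fin n → ℤ),
      g (x + ∑ i, (m i : ℝ) • B i) = g x + ∑ i, (m i : ℝ) • B' i) :
    LipschitzWith K (fun x => w x) :=
  affine_map_is_lipschitz_extremal_general n K B B' w hw g hg hequiv
end

section
/- For positive-definite symmetric real n×n matrices X, Y of determinant 1, define d_Th(Y, X) = (1/2)·max{log|λ| : λ an eigenvalue of XY⁻¹}. Then d_Th satisfies the triangle inequality: d_Th(X, Z) ≤ d_Th(X, Y) + d_Th(Y, Z) for all such X, Y, Z. -/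
open Matrix

/-- The Thurston distance between positive-definite symmetric unimodular matrices:
`d_Th(Y, X) = (1/2) max { log |λ| : λ eigenvalue of X Y⁻¹ }`. -/
noncomputable def dTh {n : ℕ} (Y X : Matrix (Fin n) (Fin n) ℝ) : ℝ :=
  (1 / 2) * sSup {r : ℝ | ∃ lam ∈ spectrum ℝ (X * Y⁻¹), r = Real.log |lam|}

/-! For positive definite `P` and symmetric `Q`, conjugating by `P^{-1/2}` shows that
`Q ≤ c • P` in the Loewner order iff every eigenvalue of `Q P⁻¹` is at most `c`, since
`P^{-1/2} Q P^{-1/2}` is symmetric with the same spectrum as `Q P⁻¹`. So with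
`λ(Q, P) := max spec (Q P⁻¹)` we get `Z ≤ λ(Z, Y) • Y ≤ λ(Z, Y) λ(Y, X) • X`, i.e.
`λ(Z, X) ≤ λ(Y, X) λ(Z, Y)`, and `2 d_Th(Y, X) = log λ(X, Y)` turns this into the triangle
inequality. -/

open scoped MatrixOrder

lemma Real.sSup_log_abs_eq_log_sSup {s : Set ℝ} (hs : s.Finite) (hpos : ∀ x ∈ s, 0 < x) :
    sSup {r : ℝ | ∃ x ∈ s, r = Real.log |x|} = Real.log (sSup s) := by
  rcases s.eq_empty_or_nonempty with rfl | hne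
  · simp
  have hmem := hne.csSup_mem hs
  refine IsGreatest.csSup_eq ⟨⟨_, hmem, by rw [abs_of_pos (hpos _ hmem)]⟩, ?_⟩
  rintro r ⟨x, hx, rfl⟩
  rw [abs_of_pos (hpos x hx)]
  exact Real.log_le_log (hpos x hx) (le_csSup hs.bddAbove hx)

namespace Matrix

variable {m : Type*} [Fintype m] [DecidableEq m]

lemma spectrum_mul_inv_mul_self {S : Matrix m m ℝ} (hS : IsUnit S) (Q : Matrix m m ℝ) :
    spectrum ℝ (Q * (S * S)⁻¹) = spectrum ℝ (S⁻¹ * Q * S⁻¹) := by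
  rw [← spectrum.units_conjugate' (u := hS.unit), coe_units_inv, hS.unit_spec, mul_inv_rev]
  simp only [mul_assoc, nonsing_inv_mul S ((isUnit_iff_isUnit_det S).mp hS), mul_one]

lemma inv_mul_mul_inv_le_iff {S : Matrix m m ℝ} (hS : S.IsHermitian) (hSu : IsUnit S)
    (A B : Matrix m m ℝ) : S⁻¹ * A * S⁻¹ ≤ B ↔ A ≤ S * B * S := by
  have hdet := (isUnit_iff_isUnit_det S).mp hSu
  have hcancel : ∀ C : Matrix m m ℝ, S * (S⁻¹ * C * S⁻¹) * S = C := fun C => by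
    simp only [← mul_assoc, mul_nonsing_inv S hdet, one_mul]
    simp only [mul_assoc, nonsing_inv_mul S hdet, mul_one]
  have hcancel' : ∀ C : Matrix m m ℝ, S⁻¹ * (S * C * S) * S⁻¹ = C := fun C => by
    simp only [← mul_assoc, nonsing_inv_mul S hdet, one_mul]
    simp only [mul_assoc, mul_nonsing_inv S hdet, mul_one]
  constructor
  · intro h
    simpa only [hcancel] using IsSelfAdjoint.conjugate_le_conjugate h hS.isSelfAdjoint
  · intro h
    simpa only [hcancel'] using IsSelfAdjoint.conjugate_le_conjugate h hS.inv.isSelfAdjoint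

namespace PosDef

variable {P Q : Matrix m m ℝ}

lemma sqrt_posDef (hP : P.PosDef) : (CFC.sqrt P).PosDef :=
  (IsStrictlyPositive.sqrt P hP.isStrictlyPositive).posDef

lemma spectrum_mul_inv_eq (hP : P.PosDef) (Q : Matrix m m ℝ) :
    spectrum ℝ (Q * P⁻¹) = spectrum ℝ ((CFC.sqrt P)⁻¹ * Q * (CFC.sqrt P)⁻¹) := by
  conv_lhs => rw [← CFC.sqrt_mul_sqrt_self P hP.posSemidef.nonneg]
  exact spectrum_mul_inv_mul_self (hP.isStrictlyPositive.isUnit_cfcSqrt) Q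

lemma le_smul_iff_forall_mem_spectrum_mul_inv_le (hP : P.PosDef) (hQ : Q.IsHermitian) (c : ℝ) :
    Q ≤ c • P ↔ ∀ x ∈ spectrum ℝ (Q * P⁻¹), x ≤ c := by
  have hS := hP.sqrt_posDef
  have hconj : ((CFC.sqrt P)⁻¹ * Q * (CFC.sqrt P)⁻¹).IsHermitian := by
    have := isHermitian_conjTranspose_mul_mul (CFC.sqrt P)⁻¹ hQ
    rwa [hS.inv.isHermitian.eq] at this
  rw [hP.spectrum_mul_inv_eq, ← le_algebraMap_iff_spectrum_le hconj.isSelfAdjoint,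
    Algebra.algebraMap_eq_smul_one, inv_mul_mul_inv_le_iff hS.isHermitian hS.isUnit,
    mul_smul_comm, smul_mul_assoc, mul_one, CFC.sqrt_mul_sqrt_self P hP.posSemidef.nonneg]

lemma inv_sqrt_mul_mul_inv_sqrt_posDef (hP : P.PosDef) (hQ : Q.PosDef) :
    ((CFC.sqrt P)⁻¹ * Q * (CFC.sqrt P)⁻¹).PosDef := by
  have hS := hP.sqrt_posDef.inv
  have := hQ.conjTranspose_mul_mul_same (mulVec_injective_iff_isUnit.mpr hS.isUnit)
  rwa [hS.isHermitian.eq] at this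

lemma pos_of_mem_spectrum_mul_inv (hP : P.PosDef) (hQ : Q.PosDef) {x : ℝ}
    (hx : x ∈ spectrum ℝ (Q * P⁻¹)) : 0 < x := by
  rw [hP.spectrum_mul_inv_eq] at hx
  exact (hP.inv_sqrt_mul_mul_inv_sqrt_posDef hQ).isStrictlyPositive.spectrum_pos hx

lemma le_sSup_spectrum_mul_inv_smul (hP : P.PosDef) (hQ : Q.IsHermitian) :
    Q ≤ sSup (spectrum ℝ (Q * P⁻¹)) • P :=
  (le_smul_iff_forall_mem_spectrum_mul_inv_le hP hQ _).mpr fun _ hx =>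
    le_csSup finite_real_spectrum.bddAbove hx

lemma spectrum_mul_inv_nonempty [Nonempty m] (hP : P.PosDef) (hQ : Q.PosDef) :
    (spectrum ℝ (Q * P⁻¹)).Nonempty := by
  rw [hP.spectrum_mul_inv_eq,
    (hP.inv_sqrt_mul_mul_inv_sqrt_posDef hQ).isHermitian.spectrum_real_eq_range_eigenvalues]
  exact Set.range_nonempty _

lemma sSup_spectrum_mul_inv_pos [Nonempty m] (hP : P.PosDef) (hQ : Q.PosDef) :
    0 < sSup (spectrum ℝ (Q * P⁻¹)) :=
  hP.pos_of_mem_spectrum_mul_inv hQ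
    ((hP.spectrum_mul_inv_nonempty hQ).csSup_mem finite_real_spectrum)

end PosDef

lemma sSup_spectrum_mul_inv_le_mul [Nonempty m] {X Y Z : Matrix m m ℝ} (hX : X.PosDef)
    (hY : Y.PosDef) (hZ : Z.PosDef) :
    sSup (spectrum ℝ (Z * X⁻¹)) ≤
      sSup (spectrum ℝ (Y * X⁻¹)) * sSup (spectrum ℝ (Z * Y⁻¹)) := by
  refine csSup_le (hX.spectrum_mul_inv_nonempty hZ)
    ((hX.le_smul_iff_forall_mem_spectrum_mul_inv_le hZ.isHermitian _).mp ?_)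
  calc Z ≤ sSup (spectrum ℝ (Z * Y⁻¹)) • Y :=
        hY.le_sSup_spectrum_mul_inv_smul hZ.isHermitian
    _ ≤ sSup (spectrum ℝ (Z * Y⁻¹)) • sSup (spectrum ℝ (Y * X⁻¹)) • X :=
      smul_le_smul_of_nonneg_left (hX.le_sSup_spectrum_mul_inv_smul hY.isHermitian)
        (hY.sSup_spectrum_mul_inv_pos hZ).le
    _ = (sSup (spectrum ℝ (Y * X⁻¹)) * sSup (spectrum ℝ (Z * Y⁻¹))) • X := by
      rw [smul_smul, mul_comm]

end Matrix

lemma dTh_eq_half_log_sSup_spectrum {n : ℕ} {Y X : Matrix (Fin n) (Fin n) ℝ} (hY : Y.PosDef)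
    (hX : X.PosDef) : dTh Y X = 1 / 2 * Real.log (sSup (spectrum ℝ (X * Y⁻¹))) := by
  rw [dTh, Real.sSup_log_abs_eq_log_sSup finite_real_spectrum
    fun _ => hY.pos_of_mem_spectrum_mul_inv hX]

theorem dTh_triangle_general (n : ℕ) (X Y Z : Matrix (Fin n) (Fin n) ℝ)
    (hX : X.PosDef) (hY : Y.PosDef) (hZ : Z.PosDef) :
    dTh X Z ≤ dTh X Y + dTh Y Z := by
  rcases isEmpty_or_nonempty (Fin n) with _ | _
  · simp [dTh, spectrum.of_subsingleton]
  rw [dTh_eq_half_log_sSup_spectrum hX hZ, dTh_eq_half_log_sSup_spectrum hX hY,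
    dTh_eq_half_log_sSup_spectrum hY hZ, ← mul_add,
    ← Real.log_mul (hX.sSup_spectrum_mul_inv_pos hY).ne' (hY.sSup_spectrum_mul_inv_pos hZ).ne']
  gcongr
  · exact hX.sSup_spectrum_mul_inv_pos hZ
  · exact sSup_spectrum_mul_inv_le_mul hX hY hZ

/-- The Thurston metric satisfies the triangle inequality on the space of
positive-definite symmetric real `n × n` matrices of determinant 1. -/
theorem dTh_triangle (n : ℕ) (X Y Z : Matrix (Fin n) (Fin n) ℝ)
    (hX : X.PosDef) (hY : Y.PosDef) (hZ : Z.PosDef)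
    (hdX : X.det = 1) (hdY : Y.det = 1) (hdZ : Z.det = 1) :
    dTh X Z ≤ dTh X Y + dTh Y Z :=
  dTh_triangle_general n X Y Z hX hY hZ
end

section
/- Let γ : [0,1] → 𝒫ₙ be a C¹ path in the space of positive-definite symmetric matrices with γ(0) = I, γ(1) = A. Then (1/2)·log λ_max(A) ≤ (1/2)∫₀¹ sup_{v≠0} ⟨γ'(t)v, v⟩/⟨γ(t)v, v⟩ dt. That is, the Thurston distance from I to A is a lower bound for the Finsler length of any path joining them. -/
open Matrix

attribute [local instance] Matrix.frobeniusNormedAddCommGroup Matrix.frobeniusNormedSpace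

/-!
Let `v` be an eigenvector of `A` for `λ_max(A)`. Since `γ 0 = 1` and `γ 1 = A`,
`log λ_max(A) = log ⟨γ(1) v, v⟩ - log ⟨γ(0) v, v⟩`, and by the fundamental theorem of calculus
this is the integral of `(d/dt) log ⟨γ(t) v, v⟩ = ⟨γ'(t) v, v⟩ / ⟨γ(t) v, v⟩`, which is bounded
pointwise by the supremum over all `v ≠ 0`. That supremum is a maximum over the unit sphere of a
function continuous in `(t, v)`, hence continuous in `t` and integrable.
-/

open Set MeasureTheory Metric

theorem setOf_exists_ne_zero_eq_image_sphere {E : Type*} [NormedAddCommGroup E]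
    [NormedSpace ℝ E] {R : E → ℝ} (hR : ∀ c : ℝ, c ≠ 0 → ∀ v, R (c • v) = R v) :
    {r | ∃ v, v ≠ 0 ∧ r = R v} = R '' sphere 0 1 := by
  ext r
  constructor
  · rintro ⟨v, hv, rfl⟩
    have hv' : ‖v‖ ≠ 0 := norm_ne_zero_iff.2 hv
    refine ⟨‖v‖⁻¹ • v, ?_, hR _ (inv_ne_zero hv') v⟩
    simp [norm_smul, hv']
  · rintro ⟨v, hv, rfl⟩
    exact ⟨v, ne_zero_of_mem_sphere one_ne_zero ⟨v, hv⟩, rfl⟩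

namespace Matrix

variable {ι : Type*} [Fintype ι]

theorem exists_mulVec_eq_smul_of_mem_spectrum {K : Type*} [Field K] [DecidableEq ι]
    {A : Matrix ι ι K} {μ : K} (hμ : μ ∈ spectrum K A) : ∃ v ≠ 0, A *ᵥ v = μ • v := by
  rw [← spectrum_toLin'] at hμ
  obtain ⟨v, hv⟩ := (Module.End.hasEigenvalue_iff_mem_spectrum.2 hμ).exists_hasEigenvector
  exact ⟨v, hv.2, by simpa using hv.apply_eq_smul⟩

theorem IsHermitian.sSup_spectrum_mem [DecidableEq ι] [Nonempty ι] {A : Matrix ι ι ℝ}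
    (hA : A.IsHermitian) : sSup (spectrum ℝ A) ∈ spectrum ℝ A := by
  rw [hA.spectrum_real_eq_range_eigenvalues]
  exact (range_nonempty _).csSup_mem (finite_range _)

theorem PosDef.mulVec_dotProduct_pos {P : Matrix ι ι ℝ} (hP : P.PosDef) {v : ι → ℝ}
    (hv : v ≠ 0) : 0 < P *ᵥ v ⬝ᵥ v := by
  simpa [dotProduct_comm] using hP.dotProduct_mulVec_pos hv

noncomputable def rayleighQuotient (B P : Matrix ι ι ℝ) (v : ι → ℝ) : ℝ :=
  (B *ᵥ v ⬝ᵥ v) / (P *ᵥ v ⬝ᵥ v)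

/-- The Finsler norm of the tangent vector `B` at the point `P` of `𝒫ₙ`. -/
noncomputable def supRayleighQuotient (B P : Matrix ι ι ℝ) : ℝ :=
  sSup {r | ∃ v : ι → ℝ, v ≠ 0 ∧ r = rayleighQuotient B P v}

theorem rayleighQuotient_smul (B P : Matrix ι ι ℝ) {c : ℝ} (hc : c ≠ 0) (v : ι → ℝ) :
    rayleighQuotient B P (c • v) = rayleighQuotient B P v := by
  simp only [rayleighQuotient, mulVec_smul, smul_dotProduct, dotProduct_smul, smul_eq_mul,
    ← mul_assoc, mul_div_mul_left _ _ (mul_ne_zero hc hc)]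

theorem continuousOn_rayleighQuotient :
    ContinuousOn (fun p : Matrix ι ι ℝ × Matrix ι ι ℝ × (ι → ℝ) =>
      rayleighQuotient p.1 p.2.1 p.2.2) {p | p.2.1.PosDef ∧ p.2.2 ≠ 0} := by
  have hquad {M : Matrix ι ι ℝ × Matrix ι ι ℝ × (ι → ℝ) → Matrix ι ι ℝ} (hM : Continuous M) :
      Continuous fun p => M p *ᵥ p.2.2 ⬝ᵥ p.2.2 :=
    (hM.matrix_mulVec continuous_snd.snd).dotProduct continuous_snd.snd
  exact (hquad continuous_fst).continuousOn.div (hquad continuous_snd.fst).continuousOn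
    fun p hp => (hp.1.mulVec_dotProduct_pos hp.2).ne'

theorem supRayleighQuotient_eq_sSup_image_sphere (B P : Matrix ι ι ℝ) :
    supRayleighQuotient B P = sSup (rayleighQuotient B P '' sphere 0 1) :=
  congrArg sSup (setOf_exists_ne_zero_eq_image_sphere fun _ hc => rayleighQuotient_smul B P hc)

theorem rayleighQuotient_le_supRayleighQuotient (B : Matrix ι ι ℝ) {P : Matrix ι ι ℝ}
    (hP : P.PosDef) {v : ι → ℝ} (hv : v ≠ 0) :
    rayleighQuotient B P v ≤ supRayleighQuotient B P := by
  refine le_csSup ?_ ⟨v, hv, rfl⟩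
  rw [setOf_exists_ne_zero_eq_image_sphere fun _ hc => rayleighQuotient_smul B P hc]
  have hcont : ContinuousOn (rayleighQuotient B P) (sphere 0 1) :=
    continuousOn_rayleighQuotient.comp (f := fun w => (B, P, w)) (by fun_prop)
      fun w hw => ⟨hP, ne_zero_of_mem_sphere one_ne_zero ⟨w, hw⟩⟩
  exact (isCompact_sphere 0 1).bddAbove_image hcont

theorem _root_.ContinuousOn.supRayleighQuotient {X : Type*} [TopologicalSpace X]
    {B P : X → Matrix ι ι ℝ} {s : Set X} (hB : ContinuousOn B s) (hP : ContinuousOn P s)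
    (hpos : ∀ x ∈ s, (P x).PosDef) :
    ContinuousOn (fun x => supRayleighQuotient (B x) (P x)) s := by
  simp_rw [continuousOn_iff_continuous_domRestrict, supRayleighQuotient_eq_sSup_image_sphere,
    image_eq_range]
  have hcont : Continuous fun p : s × sphere (0 : ι → ℝ) 1 =>
      rayleighQuotient (B p.1) (P p.1) p.2 :=
    continuousOn_rayleighQuotient.comp_continuous
      ((hB.domRestrict.comp continuous_fst).prodMk
        ((hP.domRestrict.comp continuous_fst).prodMk (continuous_subtype_val.comp continuous_snd)))
      fun p => ⟨hpos p.1 p.1.2, ne_zero_of_mem_sphere one_ne_zero p.2⟩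
  have := isCompact_univ.continuous_sSup
    (f := fun (x : s) (v : sphere (0 : ι → ℝ) 1) => rayleighQuotient (B x) (P x) v) hcont
  simp only [image_univ] at this
  exact this

theorem hasDerivAt_log_mulVec_dotProduct {γ : ℝ → Matrix ι ι ℝ} {γ' : Matrix ι ι ℝ} {t : ℝ}
    (hγ : HasDerivAt γ γ' t) (hpos : (γ t).PosDef) {v : ι → ℝ} (hv : v ≠ 0) :
    HasDerivAt (fun t => Real.log (γ t *ᵥ v ⬝ᵥ v)) (rayleighQuotient γ' (γ t) v) t := by
  let L : Matrix ι ι ℝ →L[ℝ] ℝ := LinearMap.toContinuousLinearMap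
    { toFun := fun M => M *ᵥ v ⬝ᵥ v
      map_add' := fun M N => by simp only [add_mulVec, add_dotProduct]
      map_smul' := fun c M => by simp only [smul_mulVec, smul_dotProduct, RingHom.id_apply] }
  exact (L.hasFDerivAt.comp_hasDerivAt t hγ).log (hpos.mulVec_dotProduct_pos hv).ne'

theorem log_mulVec_dotProduct_sub_le_integral {γ : ℝ → Matrix ι ι ℝ} {a b : ℝ} (hab : a < b)
    (hγ : ContDiffOn ℝ 1 γ (Icc a b)) (hpos : ∀ t ∈ Icc a b, (γ t).PosDef) {v : ι → ℝ}
    (hv : v ≠ 0) :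
    Real.log (γ b *ᵥ v ⬝ᵥ v) - Real.log (γ a *ᵥ v ⬝ᵥ v) ≤
      ∫ t in a..b, supRayleighQuotient (deriv γ t) (γ t) := by
  -- `deriv γ` is junk at the endpoints; the one-sided derivative `B` is continuous on `[a, b]`.
  set B := derivWithin γ (Icc a b)
  have hB : ContinuousOn B (Icc a b) := hγ.continuousOn_derivWithin (uniqueDiffOn_Icc hab) le_rfl
  have hderiv (t : ℝ) (ht : t ∈ Ioo a b) : HasDerivAt γ (B t) t :=
    (hγ.differentiableOn one_ne_zero t (Ioo_subset_Icc_self ht)).hasDerivWithinAt.hasDerivAt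
      (Icc_mem_nhds ht.1 ht.2)
  have hlog : ContinuousOn (fun t => Real.log (γ t *ᵥ v ⬝ᵥ v)) (Icc a b) :=
    (((continuous_id.matrix_mulVec continuous_const).dotProduct continuous_const).comp_continuousOn
      hγ.continuousOn).log fun t ht => ((hpos t ht).mulVec_dotProduct_pos hv).ne'
  have hratio : ContinuousOn (fun t => rayleighQuotient (B t) (γ t) v) (Icc a b) :=
    continuousOn_rayleighQuotient.comp (f := fun t => (B t, γ t, v))
      (hB.prodMk (hγ.continuousOn.prodMk continuousOn_const)) fun t ht => ⟨hpos t ht, hv⟩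
  have hsup : ContinuousOn (fun t => supRayleighQuotient (B t) (γ t)) (Icc a b) :=
    hB.supRayleighQuotient hγ.continuousOn hpos
  calc _ = ∫ t in a..b, rayleighQuotient (B t) (γ t) v :=
        (intervalIntegral.integral_eq_sub_of_hasDerivAt_of_le hab.le hlog
          (fun t ht => hasDerivAt_log_mulVec_dotProduct (hderiv t ht)
            (hpos t (Ioo_subset_Icc_self ht)) hv)
          (hratio.intervalIntegrable_of_Icc hab.le)).symm
    _ ≤ ∫ t in a..b, supRayleighQuotient (B t) (γ t) :=
        intervalIntegral.integral_mono_on hab.le (hratio.intervalIntegrable_of_Icc hab.le)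
          (hsup.intervalIntegrable_of_Icc hab.le)
          fun t ht => rayleighQuotient_le_supRayleighQuotient _ (hpos t ht) hv
    _ = ∫ t in a..b, supRayleighQuotient (deriv γ t) (γ t) := by
        simp only [intervalIntegral.integral_of_le hab.le, integral_Ioc_eq_integral_Ioo]
        exact setIntegral_congr_fun measurableSet_Ioo fun t ht =>
          congrArg (supRayleighQuotient · (γ t)) (hderiv t ht).deriv.symm

end Matrix

theorem thurston_dist_le_finsler_length_general (n : ℕ) (A : Matrix (Fin n) (Fin n) ℝ)
    (γ : ℝ → Matrix (Fin n) (Fin n) ℝ)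
    (hγ : ContDiffOn ℝ 1 γ (Set.Icc 0 1))
    (hpos : ∀ t ∈ Set.Icc (0:ℝ) 1, (γ t).PosDef)
    (h0 : γ 0 = 1) (h1 : γ 1 = A) :
    (1 / 2) * Real.log (sSup (spectrum ℝ A)) ≤
      (1 / 2) * ∫ t in (0:ℝ)..1, sSup {r : ℝ | ∃ v : Fin n → ℝ, v ≠ 0 ∧
        r = ((deriv γ t).mulVec v ⬝ᵥ v) / ((γ t).mulVec v ⬝ᵥ v)} := by
  rcases isEmpty_or_nonempty (Fin n) with hn | hn
  · simp [spectrum.of_subsingleton, Subsingleton.elim _ (0 : Fin n → ℝ)]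
  have hA : A.PosDef := h1 ▸ hpos 1 (right_mem_Icc.2 zero_le_one)
  obtain ⟨v, hv, hAv⟩ := exists_mulVec_eq_smul_of_mem_spectrum hA.isHermitian.sSup_spectrum_mem
  have hvv : 0 < v ⬝ᵥ v := by simpa using PosDef.one.mulVec_dotProduct_pos hv
  have hmax : 0 < sSup (spectrum ℝ A) := by
    have := hA.mulVec_dotProduct_pos hv
    rw [hAv, smul_dotProduct, smul_eq_mul] at this
    exact pos_of_mul_pos_left this hvv.le
  have hlog := log_mulVec_dotProduct_sub_le_integral zero_lt_one hγ hpos hv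
  rw [h0, h1, hAv, one_mulVec, smul_dotProduct, smul_eq_mul, Real.log_mul hmax.ne' hvv.ne',
    add_sub_cancel_right] at hlog
  gcongr
  exact hlog

/-- For a `C¹` path `γ` in the space of positive-definite symmetric matrices with
`γ 0 = I`, `γ 1 = A`, the Thurston distance `(1/2) log λ_max(A)` is at most the Finsler
length `(1/2) ∫₀¹ sup_{v ≠ 0} ⟨γ'(t) v, v⟩ / ⟨γ(t) v, v⟩ dt`. -/
theorem thurston_dist_le_finsler_length (n : ℕ) (A : Matrix (Fin n) (Fin n) ℝ)
    (γ : ℝ → Matrix (Fin n) (Fin n) ℝ)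
    (hγ : ContDiffOn ℝ 1 γ (Set.Icc 0 1))
    (hpos : ∀ t ∈ Set.Icc (0:ℝ) 1, (γ t).PosDef) (hsymm : ∀ t ∈ Set.Icc (0:ℝ) 1, (γ t).IsSymm)
    (h0 : γ 0 = 1) (h1 : γ 1 = A) :
    (1 / 2) * Real.log (sSup (spectrum ℝ A)) ≤
      (1 / 2) * ∫ t in (0:ℝ)..1, sSup {r : ℝ | ∃ v : Fin n → ℝ, v ≠ 0 ∧
        r = ((deriv γ t).mulVec v ⬝ᵥ v) / ((γ t).mulVec v ⬝ᵥ v)} :=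
  thurston_dist_le_finsler_length_general n A γ hγ hpos h0 h1
end

section
/- For every essential homotopy class of closed curves on a flat torus ℝⁿ/Λ and metrics coming from positive-definite forms, the supremum over homotopy classes α of ℓ_{X'}(α)/ℓ_X(α) equals the maximal stretch of the linear map between the tori: sup over nonzero lattice vectors v ∈ Λ of ‖v‖_{X'}/‖v‖_X = sup over nonzero vectors w ∈ ℝⁿ of ‖w‖_{X'}/‖w‖_X, where ‖v‖_X = √(vᵀXv). Hence the curve-ratio metric κ equals the Lipschitz metric d_Th. -/
/-!
The ratio `√(wᵀX'w) / √(wᵀXw)` is invariant under rescaling `w` and continuous away from `0`.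
For every `w`, the rescaled lattice points `N⁻¹ • ⌊N • w⌋` (floor taken in the coordinates of
the lattice basis) converge to `w`, so every value of the ratio on `ℝⁿ \ {0}` is a limit of
values on `Λ \ {0}`; and a set squeezed between `s` and `closure s` has the same supremum as `s`.
-/

open Matrix Set Submodule Filter Topology

theorem csSup_eq_of_subset_of_subset_closure {α : Type*} [ConditionallyCompleteLinearOrder α]
    [TopologicalSpace α] [ClosedIicTopology α] {s t : Set α} (hst : s ⊆ t)
    (hts : t ⊆ closure s) : sSup s = sSup t := by
  rcases s.eq_empty_or_nonempty with rfl | hs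
  · rw [closure_empty, subset_empty_iff] at hts
    rw [hts]
  by_cases hbdd : BddAbove s
  · have hlub : IsLUB t (sSup s) :=
      (isLUB_iff_of_subset_of_subset_closure hst hts).1 (isLUB_csSup hs hbdd)
    exact (hlub.csSup_eq (hs.mono hst)).symm
  · have hbdd' : ¬BddAbove t := fun h => hbdd (h.mono hst)
    rw [csSup_of_not_bddAbove hbdd, csSup_of_not_bddAbove hbdd']

namespace ZSpan

variable {E ι : Type*} [NormedAddCommGroup E] [NormedSpace ℝ E] [Fintype ι]
  (b : Module.Basis ι ℝ E)

theorem tendsto_inv_smul_floor_smul (w : E) :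
    Tendsto (fun N : ℕ => (N : ℝ)⁻¹ • (floor b ((N : ℝ) • w) : E)) atTop (𝓝 w) := by
  rw [tendsto_iff_norm_sub_tendsto_zero]
  have hbound : Tendsto (fun N : ℕ => (N : ℝ)⁻¹ * ∑ i, ‖b i‖) atTop (𝓝 0) := by
    simpa using (tendsto_inv_atTop_nhds_zero_nat (𝕜 := ℝ)).mul_const (∑ i, ‖b i‖)
  refine squeeze_zero' (Eventually.of_forall fun _ => norm_nonneg _) ?_ hbound
  filter_upwards [eventually_ne_atTop 0] with N hN
  have hN' : (N : ℝ) ≠ 0 := Nat.cast_ne_zero.2 hN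
  calc ‖(N : ℝ)⁻¹ • (floor b ((N : ℝ) • w) : E) - w‖
      = ‖(N : ℝ)⁻¹ • fract b ((N : ℝ) • w)‖ := by
        rw [← norm_neg, fract_apply, smul_sub, inv_smul_smul₀ hN', neg_sub]
    _ ≤ (N : ℝ)⁻¹ * ∑ i, ‖b i‖ := by
        rw [norm_smul, norm_inv, Real.norm_natCast]
        exact mul_le_mul_of_nonneg_left (norm_fract_le b _) (by positivity)

theorem sSup_image_diff_zero_eq {f : E → ℝ} (hf_smul : ∀ c : ℝ, 0 < c → ∀ w, f (c • w) = f w)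
    (hf : ∀ w ≠ 0, ContinuousAt f w) :
    sSup (f '' ((span ℤ (range b) : Set E) \ {0})) = sSup (f '' {0}ᶜ) := by
  refine csSup_eq_of_subset_of_subset_closure (image_mono fun v hv => hv.2) ?_
  rintro _ ⟨w, hw, rfl⟩
  have hlim := tendsto_inv_smul_floor_smul b w
  refine mem_closure_of_tendsto ((hf w hw).tendsto.comp hlim) ?_
  filter_upwards [hlim.eventually_ne hw, eventually_gt_atTop 0] with N hN hNpos
  refine ⟨_, ⟨(floor b _).2, fun h => hN ?_⟩,
    (hf_smul _ (inv_pos.2 (Nat.cast_pos.2 hNpos)) _).symm⟩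
  rw [mem_singleton_iff.1 h, smul_zero]

end ZSpan

theorem Module.Basis.mem_span_int_iff {ι E : Type*} [Fintype ι] [AddCommGroup E] [Module ℝ E]
    (b : Module.Basis ι ℝ E) {v : E} :
    v ∈ span ℤ (range b) ↔ ∃ m : ι → ℤ, v = ∑ i, (m i : ℝ) • b i := by
  simp only [mem_span_range_iff_exists_fun, Int.cast_smul_eq_zsmul, eq_comm]

namespace Matrix

variable {n : Type*} [Fintype n]

theorem sqrt_smul_dotProduct_mulVec_smul (X : Matrix n n ℝ) (c : ℝ) (w : n → ℝ) :
    √((c • w) ⬝ᵥ X *ᵥ (c • w)) = |c| * √(w ⬝ᵥ X *ᵥ w) := by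
  rw [mulVec_smul, smul_dotProduct, dotProduct_smul, smul_eq_mul, smul_eq_mul, ← mul_assoc,
    Real.sqrt_mul (mul_self_nonneg c), Real.sqrt_mul_self_eq_abs]

theorem sqrt_dotProduct_mulVec_ratio_smul (X X' : Matrix n n ℝ) {c : ℝ} (hc : c ≠ 0) (w : n → ℝ) :
    √((c • w) ⬝ᵥ X' *ᵥ (c • w)) / √((c • w) ⬝ᵥ X *ᵥ (c • w))
      = √(w ⬝ᵥ X' *ᵥ w) / √(w ⬝ᵥ X *ᵥ w) := by
  rw [sqrt_smul_dotProduct_mulVec_smul, sqrt_smul_dotProduct_mulVec_smul,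
    mul_div_mul_left _ _ (abs_ne_zero.2 hc)]

theorem continuousAt_sqrt_dotProduct_mulVec_ratio {X : Matrix n n ℝ} (hX : X.PosDef)
    (X' : Matrix n n ℝ) {w : n → ℝ} (hw : w ≠ 0) :
    ContinuousAt (fun w : n → ℝ => √(w ⬝ᵥ X' *ᵥ w) / √(w ⬝ᵥ X *ᵥ w)) w := by
  have hquad : ∀ Y : Matrix n n ℝ, Continuous fun w : n → ℝ => w ⬝ᵥ Y *ᵥ w := fun Y =>
    continuous_id.dotProduct (continuous_const.matrix_mulVec continuous_id)
  refine (hquad X').sqrt.continuousAt.div (hquad X).sqrt.continuousAt ?_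
  simpa [Real.sqrt_eq_zero', not_le] using hX.dotProduct_mulVec_pos hw

end Matrix

theorem sup_lattice_stretch_eq_sup_stretch_general (n : ℕ)
    (X X' : Matrix (Fin n) (Fin n) ℝ) (hX : X.PosDef)
    (B : Module.Basis (Fin n) ℝ (Fin n → ℝ)) :
    sSup {r : ℝ | ∃ v : Fin n → ℝ, v ≠ 0 ∧ (∃ m : Fin n → ℤ, v = ∑ i, (m i : ℝ) • B i) ∧
        r = Real.sqrt (v ⬝ᵥ X'.mulVec v) / Real.sqrt (v ⬝ᵥ X.mulVec v)}
      = sSup {r : ℝ | ∃ w : Fin n → ℝ, w ≠ 0 ∧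
        r = Real.sqrt (w ⬝ᵥ X'.mulVec w) / Real.sqrt (w ⬝ᵥ X.mulVec w)} := by
  have key := ZSpan.sSup_image_diff_zero_eq B
    (fun c hc w => sqrt_dotProduct_mulVec_ratio_smul X X' hc.ne' w)
    (fun w hw => continuousAt_sqrt_dotProduct_mulVec_ratio hX X' hw)
  convert key using 2 <;> ext r
  · simp [B.mem_span_int_iff, eq_comm, and_comm]
  · simp [eq_comm]

/-- For a full-rank lattice `Λ ⊂ ℝⁿ` (spanned over `ℤ` by a basis `B` of `ℝⁿ`) and
positive-definite forms `X, X'`, the supremum of the length ratios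
`‖v‖_{X'} / ‖v‖_X = √(vᵀX'v)/√(vᵀXv)` over nonzero lattice vectors `v ∈ Λ` (i.e. over
homotopy classes of essential closed curves on the torus) equals the supremum over all
nonzero vectors `w ∈ ℝⁿ`, the maximal stretch of the linear map between the tori.
Hence the curve-ratio metric `κ` equals the Lipschitz metric `d_Th`. -/
theorem sup_lattice_stretch_eq_sup_stretch (n : ℕ)
    (X X' : Matrix (Fin n) (Fin n) ℝ) (hX : X.PosDef) (hX' : X'.PosDef)
    (B : Module.Basis (Fin n) ℝ (Fin n → ℝ)) :
    sSup {r : ℝ | ∃ v : Fin n → ℝ, v ≠ 0 ∧ (∃ m : Fin n → ℤ, v = ∑ i, (m i : ℝ) • B i) ∧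
        r = Real.sqrt (v ⬝ᵥ X'.mulVec v) / Real.sqrt (v ⬝ᵥ X.mulVec v)}
      = sSup {r : ℝ | ∃ w : Fin n → ℝ, w ≠ 0 ∧
        r = Real.sqrt (w ⬝ᵥ X'.mulVec w) / Real.sqrt (w ⬝ᵥ X.mulVec w)} :=
  sup_lattice_stretch_eq_sup_stretch_general n X X' hX B
end
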